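/- Over a finite set of policies with real-valued ethical value V_N(π) and task value V_x(π) at a fixed state, there exists a weight w > 0 such that every policy maximizing V_x(π) + w·V_N(π) is ethical (maximizes V_N), provided at least one ethical policy exists. In fact any w > (max_π V_x(π) − min_π V_x(π)) / δ works, where δ > 0 is the smallest positive gap between the maximum of V_N and any strictly smaller value of V_N. -/
import Mathlib

/-- Over a finite nonempty set of policies with ethical value `VN` and task
value `Vx` (at a fixed state), let `M` be the maximum of `VN`, let `m` be the
largest value of `VN` strictly below `M` (assumed to exist), and let `Mx` and
`mx` be the maximum and minimum of `Vx`.  Then for every weight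
`w > (Mx - mx) / (M - m)`, every policy maximizing `Vx + w·VN` is ethical,
i.e. attains `VN = M`. -/
theorem exists_weight_scalarized_ethical {Pol : Type} [Fintype Pol] [Nonempty Pol]
    (VN Vx : Pol → ℝ)
    (M : ℝ) (hMub : ∀ π : Pol, VN π ≤ M) (hMmem : ∃ π : Pol, VN π = M)
    (m : ℝ) (hmub : ∀ π : Pol, VN π < M → VN π ≤ m)
    (hmmem : ∃ π : Pol, VN π < M ∧ VN π = m)
    (Mx : ℝ) (hMxub : ∀ π : Pol, Vx π ≤ Mx) (hMxmem : ∃ π : Pol, Vx π = Mx)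
    (mx : ℝ) (hmxlb : ∀ π : Pol, mx ≤ Vx π) (hmxmem : ∃ π : Pol, Vx π = mx) :
    ∀ w : ℝ, (Mx - mx) / (M - m) < w →
      ∀ π : Pol, (∀ π' : Pol, Vx π' + w * VN π' ≤ Vx π + w * VN π) →
        VN π = M := by
  intro w hw π hmax
  obtain ⟨πm, hπm, hπmm⟩ := hmmem
  have hmM : m < M := by
    have := hmub πm hπm
    linarith
  by_contra h
  have hlt : VN π < M := lt_of_le_of_ne (hMub π) h
  have hle : VN π ≤ m := hmub π hlt
  obtain ⟨πs, hπs⟩ := hMmem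
  have h1 : Vx πs + w * VN πs ≤ Vx π + w * VN π := hmax πs
  have hw' : (Mx - mx) < w * (M - m) := by
    have := (div_lt_iff₀ (by linarith : (0:ℝ) < M - m)).mp hw
    linarith
  have hwpos : 0 < w := by
    have h0 : (0:ℝ) ≤ (Mx - mx) / (M - m) :=
      div_nonneg (by have := hMxub π; have := hmxlb πs; obtain ⟨p, hp⟩ := hMxmem; obtain ⟨q, hq⟩ := hmxmem; have := hMxub q; have := hmxlb q; linarith) (by linarith)
    linarith
  have : w * M ≤ Vx π - Vx πs + w * VN π := by rw [hπs] at h1; linarith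
  have h2 : w * (M - m) ≤ Mx - mx := by
    have hVN : w * VN π ≤ w * m := by nlinarith
    have := hMxub π
    have := hmxlb πs
    nlinarith
  linarith
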